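/- arXiv:2109.01970 — 4 statements merged into one kernel-verified Lean document; each statement's English description precedes it below -/
import Mathlib

section
/- Let {S(t)}_{t≥0} be a dissipative semigroup on a Banach space (X, ‖·‖) with positively invariant bounded absorbing set 𝓑₀, and let φ: ℝ⁺ → ℝ⁺ satisfy φ(t) → 0 as t → ∞. Suppose there exists t₀ > 0 such that for every ε > 0 there exist a finite-dimensional subspace X₁ ⊆ X and a bounded linear projection P: X → X₁ with sup_{x ∈ 𝓑₀} ‖(I − P)S(t)x‖ ≤ φ(t) + ε for all t ≥ t₀. Then α(S(t)𝓑₀) ≤ 2φ(t) for all t ≥ t₀. -/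
/-!
For each `ε > 0`, the projection `P` maps the bounded set `S t '' 𝓑₀` to a bounded, hence totally
bounded, subset of the finite-dimensional space `X₁`. Every point of `S t '' 𝓑₀` lies within
`φ t + ε` of that set, so a finite `ε`-net of it yields finitely many balls of radius `φ t + 2ε`
covering `S t '' 𝓑₀`, whence `α (S t '' 𝓑₀) ≤ 2 (φ t + 2ε)`.
-/

open Set Metric Filter

noncomputable def kuratowski {X : Type*} [MetricSpace X] (A : Set X) : ℝ :=
  sInf {δ : ℝ | 0 < δ ∧ ∃ 𝓒 : Finset (Set X), (A ⊆ ⋃ s ∈ 𝓒, s) ∧ ∀ s ∈ 𝓒, Metric.diam s < δ}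

theorem Bornology.IsBounded.totallyBounded_of_subset_submodule {𝕜 E : Type*}
    [NontriviallyNormedField 𝕜] [ProperSpace 𝕜] [NormedAddCommGroup E] [NormedSpace 𝕜 E]
    {B : Set E} (hB : Bornology.IsBounded B) (V : Submodule 𝕜 E) [FiniteDimensional 𝕜 V]
    (hBV : B ⊆ V) : TotallyBounded B := by
  have := FiniteDimensional.proper 𝕜 V
  have hpre : Bornology.IsBounded ((↑) ⁻¹' B : Set V) := by
    obtain ⟨C, hC⟩ := isBounded_iff.mp hB
    exact isBounded_iff.mpr ⟨C, fun x hx y hy => hC hx hy⟩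
  have := (hpre.isCompact_closure.totallyBounded.subset subset_closure).image
    uniformContinuous_subtype_val
  rwa [image_preimage_eq_of_subset (by rwa [Subtype.range_coe])] at this

section Kuratowski

variable {X : Type*} [MetricSpace X] {A : Set X} {r : ℝ}

theorem kuratowski_le_two_mul_of_subset_biUnion_closedBall {F : Set X} (hF : F.Finite)
    (hr : 0 ≤ r) (hA : A ⊆ ⋃ y ∈ F, closedBall y r) : kuratowski A ≤ 2 * r := by
  classical
  refine le_of_forall_gt_imp_ge_of_dense fun δ hδ => csInf_le ⟨0, fun _ h => h.1.le⟩
    ⟨by linarith, hF.toFinset.image (closedBall · r), ?_, ?_⟩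
  · simpa only [Finset.set_biUnion_finset_image, Finite.mem_toFinset] using hA
  · simp only [Finset.mem_image, Finite.mem_toFinset]
    rintro _ ⟨y, -, rfl⟩
    exact (diam_closedBall hr).trans_lt hδ

theorem kuratowski_le_two_mul_of_forall_exists_dist_le {T : Set X} (hT : TotallyBounded T)
    (hr : 0 ≤ r) (hA : ∀ x ∈ A, ∃ y ∈ T, dist x y ≤ r) : kuratowski A ≤ 2 * r := by
  refine le_of_forall_pos_le_add fun ε hε => ?_
  obtain ⟨F, hF, hTF⟩ := totallyBounded_iff.mp hT (ε / 2) (half_pos hε)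
  have hcover : A ⊆ ⋃ z ∈ F, closedBall z (r + ε / 2) := by
    intro x hx
    obtain ⟨y, hyT, hxy⟩ := hA x hx
    obtain ⟨z, hzF, hyz⟩ := mem_iUnion₂.mp (hTF hyT)
    refine mem_iUnion₂.mpr ⟨z, hzF, ?_⟩
    calc dist x z ≤ dist x y + dist y z := dist_triangle x y z
      _ ≤ r + ε / 2 := add_le_add hxy (mem_ball.mp hyz).le
  calc kuratowski A ≤ 2 * (r + ε / 2) :=
        kuratowski_le_two_mul_of_subset_biUnion_closedBall hF (by positivity) hcover
    _ = 2 * r + ε := by ring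

end Kuratowski

theorem stmt_7_general {X : Type*} [NormedAddCommGroup X] [NormedSpace ℝ X]
    (S : ℝ → X → X)
    (𝓑₀ : Set X) (hBbdd : Bornology.IsBounded 𝓑₀)
    (hBinv : ∀ t : ℝ, 0 ≤ t → S t '' 𝓑₀ ⊆ 𝓑₀)
    (φ : ℝ → ℝ) (hφpos : ∀ t : ℝ, 0 ≤ φ t)
    (t₀ : ℝ) (ht₀ : 0 < t₀)
    (hproj : ∀ ε : ℝ, 0 < ε → ∃ (X₁ : Submodule ℝ X) (P : X →L[ℝ] X),
      FiniteDimensional ℝ X₁ ∧ (∀ x : X, P x ∈ X₁) ∧ (∀ x ∈ X₁, P x = x) ∧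
      ∀ x ∈ 𝓑₀, ∀ t : ℝ, t₀ ≤ t → ‖S t x - P (S t x)‖ ≤ φ t + ε) :
    ∀ t : ℝ, t₀ ≤ t → kuratowski (S t '' 𝓑₀) ≤ 2 * φ t := by
  intro t ht
  refine le_of_forall_pos_le_add fun ε hε => ?_
  obtain ⟨X₁, P, hfd, hmem, -, hP⟩ := hproj (ε / 2) (half_pos hε)
  have hB : Bornology.IsBounded (S t '' 𝓑₀) := hBbdd.subset (hBinv t (ht₀.le.trans ht))
  have hT : TotallyBounded (P '' (S t '' 𝓑₀)) :=
    (P.lipschitz.isBounded_image hB).totallyBounded_of_subset_submodule X₁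
      (image_subset_iff.mpr fun x _ => hmem x)
  have hnear : ∀ y ∈ S t '' 𝓑₀, ∃ z ∈ P '' (S t '' 𝓑₀), dist y z ≤ φ t + ε / 2 := by
    rintro _ ⟨x, hx, rfl⟩
    exact ⟨P (S t x), mem_image_of_mem P (mem_image_of_mem _ hx), by
      rw [dist_eq_norm]; exact hP x hx t ht⟩
  calc kuratowski (S t '' 𝓑₀) ≤ 2 * (φ t + ε / 2) :=
        kuratowski_le_two_mul_of_forall_exists_dist_le hT (by linarith [hφpos t]) hnear
    _ = 2 * φ t + ε := by ring

theorem stmt_7 {X : Type*} [NormedAddCommGroup X] [NormedSpace ℝ X] [CompleteSpace X]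
    (S : ℝ → X → X)
    (hcont : ∀ t, 0 ≤ t → Continuous (S t))
    (hS0 : ∀ x, S 0 x = x)
    (hSadd : ∀ s t : ℝ, 0 ≤ s → 0 ≤ t → ∀ x, S (s + t) x = S s (S t x))
    (𝓑₀ : Set X) (hBbdd : Bornology.IsBounded 𝓑₀)
    (hBinv : ∀ t : ℝ, 0 ≤ t → S t '' 𝓑₀ ⊆ 𝓑₀)
    (habs : ∀ B : Set X, Bornology.IsBounded B → ∃ tB : ℝ, 0 ≤ tB ∧
      ∀ t : ℝ, tB ≤ t → S t '' B ⊆ 𝓑₀)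
    (φ : ℝ → ℝ) (hφpos : ∀ t : ℝ, 0 ≤ φ t) (hφ0 : Tendsto φ atTop (nhds 0))
    (t₀ : ℝ) (ht₀ : 0 < t₀)
    (hproj : ∀ ε : ℝ, 0 < ε → ∃ (X₁ : Submodule ℝ X) (P : X →L[ℝ] X),
      FiniteDimensional ℝ X₁ ∧ (∀ x : X, P x ∈ X₁) ∧ (∀ x ∈ X₁, P x = x) ∧
      ∀ x ∈ 𝓑₀, ∀ t : ℝ, t₀ ≤ t → ‖S t x - P (S t x)‖ ≤ φ t + ε) :
    ∀ t : ℝ, t₀ ≤ t → kuratowski (S t '' 𝓑₀) ≤ 2 * φ t :=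
  stmt_7_general S 𝓑₀ hBbdd hBinv φ hφpos t₀ ht₀ hproj
end

section
/- Let {S(t)}_{t≥0} be a dissipative semigroup on a complete metric space (X,d) with positively invariant bounded absorbing set 𝓑₀. Assume there exist T > 0, δ₀ > 0, η ∈ [0,1), a function g: (ℝ⁺)^m → ℝ⁺ nondecreasing in each variable with g(0,…,0) = 0 and continuous at (0,…,0), and pseudometrics ϱ₁,…,ϱ_m on 𝓑₀, each precompact on 𝓑₀ (every sequence in 𝓑₀ has a subsequence Cauchy with respect to ϱᵢ), such that d(S(T)y₁, S(T)y₂) ≤ η d(y₁,y₂) + g(ϱ₁(y₁,y₂),…,ϱ_m(y₁,y₂)) holds whenever y₁, y₂ ∈ 𝓑₀ satisfy ϱᵢ(y₁,y₂) ≤ δ₀ for all i. Then α(S(t)𝓑₀) ≤ η^{t/T − 1} α(𝓑₀) for all t ≥ T; in particular the system is exponentially decaying with respect to the noncompactness measure. -/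
/-!
A single application of `S T` shrinks the Kuratowski measure of every subset of `𝓑₀` by the
factor `η`. Cover the subset by finitely many sets of diameter close to its measure and refine
this cover by finitely many pieces that are small for every `ϱᵢ` (a pseudometric that is
precompact on `𝓑₀` admits finite nets there). On each piece the quasi-stability estimate bounds
the diameter of the image by `η δ + g(ε, …, ε)`, and continuity of `g` at `0` makes the second
term negligible. Writing `t = ⌊t/T⌋ T + r`, iterating `⌊t/T⌋` times and absorbing `S r` by the
invariance of `𝓑₀` gives the factor `η ^ ⌊t/T⌋ ≤ η ^ (t/T - 1)`.
-/

open Set Metric Filter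

open Topology

section Kuratowski

variable {X : Type*} [MetricSpace X]

lemma kuratowski_nonneg (A : Set X) : 0 ≤ kuratowski A :=
  Real.sInf_nonneg fun _ hδ => hδ.1.le

lemma kuratowski_le_of_cover {A : Set X} {δ : ℝ} (hδ : 0 < δ) (𝓒 : Finset (Set X))
    (hA : A ⊆ ⋃ s ∈ 𝓒, s) (h𝓒 : ∀ s ∈ 𝓒, diam s < δ) : kuratowski A ≤ δ :=
  csInf_le ⟨0, fun _ hδ' => hδ'.1.le⟩ ⟨hδ, 𝓒, hA, h𝓒⟩

lemma exists_cover_of_kuratowski_lt {A : Set X} {δ : ℝ} (h : kuratowski A < δ) :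
    ∃ 𝓒 : Finset (Set X), A ⊆ ⋃ s ∈ 𝓒, s ∧ ∀ s ∈ 𝓒, diam s < δ := by
  have hne : {δ : ℝ | 0 < δ ∧ ∃ 𝓒 : Finset (Set X), (A ⊆ ⋃ s ∈ 𝓒, s) ∧
      ∀ s ∈ 𝓒, diam s < δ}.Nonempty :=
    ⟨diam (univ : Set X) + 1, by positivity, {univ}, by simp, by simp⟩
  obtain ⟨δ', ⟨-, 𝓒, hA, h𝓒⟩, hδ'⟩ := exists_lt_of_csInf_lt hne h
  exact ⟨𝓒, hA, fun s hs => (h𝓒 s hs).trans hδ'⟩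

/-- The measure degenerates on an unbounded space, where `univ` has junk diameter `0`. -/
lemma kuratowski_eq_zero_of_not_isBounded_univ (hX : ¬ Bornology.IsBounded (univ : Set X))
    (A : Set X) : kuratowski A = 0 := by
  refine le_antisymm (le_of_forall_pos_le_add fun ε hε => ?_) (kuratowski_nonneg A)
  refine kuratowski_le_of_cover (by linarith) {univ} (by simp) ?_
  simpa [diam_eq_zero_of_unbounded hX] using hε

lemma kuratowski_mono {A B : Set X} (h : A ⊆ B) : kuratowski A ≤ kuratowski B := by
  refine le_of_forall_gt_imp_ge_of_dense fun δ hδ => ?_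
  obtain ⟨𝓒, hB, h𝓒⟩ := exists_cover_of_kuratowski_lt hδ
  exact kuratowski_le_of_cover ((kuratowski_nonneg B).trans_lt hδ) 𝓒 (h.trans hB) h𝓒

end Kuratowski

section Precompact

variable {X : Type*}

def IsPrecompactOn (ρ : X → X → ℝ) (B : Set X) : Prop :=
  ∀ y : ℕ → X, (∀ n, y n ∈ B) → ∃ k : ℕ → ℕ, StrictMono k ∧
    ∀ ε : ℝ, 0 < ε → ∃ N : ℕ, ∀ p q : ℕ, N ≤ p → N ≤ q → ρ (y (k p)) (y (k q)) ≤ ε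

lemma IsPrecompactOn.exists_finset_forall_le {ρ : X → X → ℝ} {B : Set X}
    (hρ : IsPrecompactOn ρ B) {ε : ℝ} (hε : 0 < ε) :
    ∃ s : Finset X, ∀ y ∈ B, ∃ c ∈ s, ρ y c ≤ ε := by
  by_contra! h
  obtain ⟨y, hyB, hsep⟩ :=
    exists_seq_of_forall_finset_exists (· ∈ B) (fun x y => ε < ρ y x) fun s _ => h s
  obtain ⟨k, hk, hcauchy⟩ := hρ y hyB
  obtain ⟨N, hN⟩ := hcauchy ε hε
  exact (hN (N + 1) N (by omega) le_rfl).not_gt (hsep _ _ (hk (Nat.lt_succ_self N)))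

lemma exists_finset_cover_forall_le {ι : Type*} [Finite ι] {ϱ : ι → X → X → ℝ} {B : Set X}
    (hpre : ∀ i, IsPrecompactOn (ϱ i) B) (hsymm : ∀ i x y, ϱ i x y = ϱ i y x)
    (htri : ∀ i x y z, ϱ i x z ≤ ϱ i x y + ϱ i y z) {ε : ℝ} (hε : 0 < ε) :
    ∃ 𝓓 : Finset (Set X), B ⊆ ⋃ P ∈ 𝓓, P ∧ ∀ P ∈ 𝓓, ∀ x ∈ P, ∀ y ∈ P, ∀ i, ϱ i x y ≤ ε := by
  classical
  have := Fintype.ofFinite ι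
  choose net hnet using fun i => (hpre i).exists_finset_forall_le (half_pos hε)
  let cell : (∀ i, net i) → Set X := fun f => {y | ∀ i, ϱ i y (f i) ≤ ε / 2}
  refine ⟨Finset.univ.image cell, fun y hy => ?_, ?_⟩
  · choose c hc hyc using fun i => hnet i y hy
    exact mem_iUnion₂.2
      ⟨cell fun i => ⟨c i, hc i⟩, Finset.mem_image_of_mem cell (Finset.mem_univ _), hyc⟩
  · simp only [Finset.mem_image, Finset.mem_univ, true_and, forall_exists_index,
      forall_apply_eq_imp_iff]
    intro f x hx y hy i
    calc ϱ i x y ≤ ϱ i x (f i) + ϱ i (f i) y := htri i _ _ _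
      _ ≤ ε / 2 + ε / 2 := add_le_add (hx i) (hsymm i y (f i) ▸ hy i)
      _ = ε := add_halves ε

end Precompact

lemma exists_pos_le_apply_const_lt {ι : Type*} {g : (ι → ℝ) → ℝ} (hg : ContinuousAt g 0)
    (hg0 : g 0 = 0) {δ₀ e : ℝ} (hδ₀ : 0 < δ₀) (he : 0 < e) :
    ∃ ε, 0 < ε ∧ ε ≤ δ₀ ∧ g (fun _ => ε) < e := by
  have hconst : Tendsto (fun ε : ℝ => g fun _ => ε) (𝓝[>] 0) (𝓝 0) := by
    have : Tendsto (fun ε : ℝ => fun _ : ι => ε) (𝓝[>] 0) (𝓝 0) :=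
      ((continuous_pi fun _ => continuous_id).tendsto' 0 0 rfl).mono_left nhdsWithin_le_nhds
    have hlim := hg.tendsto.comp this
    rwa [hg0] at hlim
  obtain ⟨ε, hge, hε, hεδ₀⟩ :=
    ((hconst.eventually (gt_mem_nhds he)).and (Ioo_mem_nhdsGT hδ₀)).exists
  exact ⟨ε, hε, hεδ₀.le, hge⟩

section Contraction

variable {X : Type*} [MetricSpace X]

lemma kuratowski_image_le_mul_of_quasiStable {ι : Type*} [Finite ι] (F : X → X) {B₀ : Set X}
    {η δ₀ : ℝ} (hη : 0 ≤ η) (hδ₀ : 0 < δ₀) {g : (ι → ℝ) → ℝ} (hgmono : Monotone g)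
    (hg0 : g 0 = 0) (hgcont : ContinuousAt g 0) {ϱ : ι → X → X → ℝ}
    (hsymm : ∀ i x y, ϱ i x y = ϱ i y x) (htri : ∀ i x y z, ϱ i x z ≤ ϱ i x y + ϱ i y z)
    (hpre : ∀ i, IsPrecompactOn (ϱ i) B₀)
    (hquasi : ∀ y₁ ∈ B₀, ∀ y₂ ∈ B₀, (∀ i, ϱ i y₁ y₂ ≤ δ₀) →
      dist (F y₁) (F y₂) ≤ η * dist y₁ y₂ + g (fun i => ϱ i y₁ y₂))
    {B : Set X} (hB : B ⊆ B₀) : kuratowski (F '' B) ≤ η * kuratowski B := by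
  classical
  by_cases hX : Bornology.IsBounded (univ : Set X)
  swap
  · simp [kuratowski_eq_zero_of_not_isBounded_univ hX]
  have hsmall : ∀ δ, kuratowski B < δ → ∀ e, 0 < e → kuratowski (F '' B) ≤ η * δ + e := by
    intro δ hδ e he
    have hδpos : 0 < δ := (kuratowski_nonneg B).trans_lt hδ
    obtain ⟨𝓒, hB𝓒, h𝓒⟩ := exists_cover_of_kuratowski_lt hδ
    obtain ⟨ε, hε, hεδ₀, hgε⟩ := exists_pos_le_apply_const_lt hgcont hg0 hδ₀ he
    obtain ⟨𝓓, hB𝓓, h𝓓⟩ := exists_finset_cover_forall_le hpre hsymm htri hε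
    have hgε_nonneg : 0 ≤ g fun _ => ε := hg0 ▸ hgmono fun _ => hε.le
    refine kuratowski_le_of_cover (by positivity)
      ((𝓒 ×ˢ 𝓓).image fun sP => F '' (B ∩ sP.1 ∩ sP.2)) ?_ ?_
    · rintro _ ⟨y, hy, rfl⟩
      obtain ⟨s, hs, hys⟩ := mem_iUnion₂.1 (hB𝓒 hy)
      obtain ⟨P, hP, hyP⟩ := mem_iUnion₂.1 (hB𝓓 (hB hy))
      exact mem_iUnion₂.2 ⟨F '' (B ∩ s ∩ P),
        Finset.mem_image.2 ⟨(s, P), Finset.mem_product.2 ⟨hs, hP⟩, rfl⟩, y, ⟨⟨hy, hys⟩, hyP⟩, rfl⟩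
    simp only [Finset.mem_image, Finset.mem_product, Prod.exists, forall_exists_index, and_imp]
    rintro _ s P hs hP rfl
    refine (diam_le_of_forall_dist_le (C := η * δ + g fun _ => ε) (by positivity) ?_).trans_lt
      (by linarith)
    rintro _ ⟨x, ⟨⟨hxB, hxs⟩, hxP⟩, rfl⟩ _ ⟨y, ⟨⟨hyB, hys⟩, hyP⟩, rfl⟩
    have hϱ : ∀ i, ϱ i x y ≤ ε := h𝓓 P hP x hxP y hyP
    have hdist : dist x y ≤ δ :=
      (dist_le_diam_of_mem (hX.subset (subset_univ s)) hxs hys).trans (h𝓒 s hs).le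
    calc dist (F x) (F y) ≤ η * dist x y + g fun i => ϱ i x y :=
          hquasi x (hB hxB) y (hB hyB) fun i => (hϱ i).trans hεδ₀
      _ ≤ η * δ + g fun _ => ε :=
          add_le_add (mul_le_mul_of_nonneg_left hdist hη) (hgmono hϱ)
  refine le_of_forall_pos_le_add fun ε hε => ?_
  have he : 0 < ε / (η + 1) := div_pos hε (by linarith)
  calc kuratowski (F '' B) ≤ η * (kuratowski B + ε / (η + 1)) + ε / (η + 1) :=
        hsmall _ (by linarith) _ he
    _ = η * kuratowski B + ε := by field_simp; ring

lemma kuratowski_image_iterate_le {F : X → X} {B₀ : Set X} {η : ℝ} (hη : 0 ≤ η)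
    (hF : MapsTo F B₀ B₀) (hcontr : ∀ B ⊆ B₀, kuratowski (F '' B) ≤ η * kuratowski B) :
    ∀ (n : ℕ), ∀ A ⊆ B₀, kuratowski (F^[n] '' A) ≤ η ^ n * kuratowski A
  | 0, A, _ => by simp
  | n + 1, A, hA => by
    rw [Function.iterate_succ', image_comp]
    calc kuratowski (F '' (F^[n] '' A)) ≤ η * kuratowski (F^[n] '' A) :=
          hcontr _ ((hF.iterate n).mono_left hA).image_subset
      _ ≤ η * (η ^ n * kuratowski A) :=
          mul_le_mul_of_nonneg_left (kuratowski_image_iterate_le hη hF hcontr n A hA) hη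
      _ = η ^ (n + 1) * kuratowski A := by ring

end Contraction

lemma semigroup_apply_nat_mul_add {X : Type*} (S : ℝ → X → X)
    (hSadd : ∀ s t : ℝ, 0 ≤ s → 0 ≤ t → ∀ x, S (s + t) x = S s (S t x)) {T r : ℝ}
    (hT : 0 ≤ T) (hr : 0 ≤ r) (x : X) : ∀ n : ℕ, S (n * T + r) x = (S T)^[n] (S r x)
  | 0 => by simp
  | n + 1 => by
    rw [Function.iterate_succ_apply', ← semigroup_apply_nat_mul_add S hSadd hT hr x n,
      ← hSadd T _ hT (by positivity)]
    congr 1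
    push_cast
    ring

lemma pow_floor_le_rpow_sub_one {η x : ℝ} (hη : 0 ≤ η) (hη1 : η ≤ 1) (hx : 1 ≤ x) :
    η ^ ⌊x⌋₊ ≤ η ^ (x - 1) := by
  rw [← Real.rpow_natCast]
  exact Real.rpow_le_rpow_of_exponent_ge' hη hη1 (by linarith)
    (by linarith [Nat.lt_floor_add_one x])

theorem stmt_9_general {X : Type*} [MetricSpace X] {m : ℕ}
    (S : ℝ → X → X)
    (hSadd : ∀ s t : ℝ, 0 ≤ s → 0 ≤ t → ∀ x, S (s + t) x = S s (S t x))
    (𝓑₀ : Set X)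
    (hBinv : ∀ t : ℝ, 0 ≤ t → S t '' 𝓑₀ ⊆ 𝓑₀)
    (T : ℝ) (hT : 0 < T) (δ₀ : ℝ) (hδ₀ : 0 < δ₀)
    (η : ℝ) (hη : 0 ≤ η) (hη1 : η < 1)
    (g : (Fin m → ℝ) → ℝ)
    (hgmono : ∀ v w : Fin m → ℝ, (∀ i, v i ≤ w i) → g v ≤ g w)
    (hg0 : g 0 = 0) (hgcont : ContinuousAt g 0)
    (ϱ : Fin m → X → X → ℝ)
    (hϱsymm : ∀ i x y, ϱ i x y = ϱ i y x)
    (hϱtri : ∀ i x y z, ϱ i x z ≤ ϱ i x y + ϱ i y z)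
    (hϱpre : ∀ i, ∀ y : ℕ → X, (∀ n, y n ∈ 𝓑₀) →
      ∃ k : ℕ → ℕ, StrictMono k ∧
        ∀ ε : ℝ, 0 < ε → ∃ N : ℕ, ∀ p q : ℕ, N ≤ p → N ≤ q → ϱ i (y (k p)) (y (k q)) ≤ ε)
    (hquasi : ∀ y₁ ∈ 𝓑₀, ∀ y₂ ∈ 𝓑₀, (∀ i, ϱ i y₁ y₂ ≤ δ₀) →
      dist (S T y₁) (S T y₂) ≤ η * dist y₁ y₂ + g (fun i => ϱ i y₁ y₂)) :
    ∀ t : ℝ, T ≤ t → kuratowski (S t '' 𝓑₀) ≤ η ^ (t / T - 1) * kuratowski 𝓑₀ := by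
  intro t ht
  set n := ⌊t / T⌋₊
  have hr : 0 ≤ t - n * T :=
    sub_nonneg.2 ((le_div_iff₀ hT).1 (Nat.floor_le (div_nonneg (hT.le.trans ht) hT.le)))
  have hSt : S t '' 𝓑₀ = (S T)^[n] '' (S (t - n * T) '' 𝓑₀) := by
    rw [image_image]
    refine image_congr fun x _ => ?_
    rw [← semigroup_apply_nat_mul_add S hSadd hT.le hr, add_sub_cancel]
  have hcontr : ∀ B ⊆ 𝓑₀, kuratowski (S T '' B) ≤ η * kuratowski B := fun _ =>
    kuratowski_image_le_mul_of_quasiStable (S T) hη hδ₀ hgmono hg0 hgcont hϱsymm hϱtri hϱpre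
      hquasi
  calc kuratowski (S t '' 𝓑₀) ≤ η ^ n * kuratowski (S (t - n * T) '' 𝓑₀) := hSt ▸
        kuratowski_image_iterate_le hη (mapsTo_iff_image_subset.2 (hBinv T hT.le)) hcontr n _
          (hBinv _ hr)
    _ ≤ η ^ n * kuratowski 𝓑₀ :=
        mul_le_mul_of_nonneg_left (kuratowski_mono (hBinv _ hr)) (pow_nonneg hη n)
    _ ≤ η ^ (t / T - 1) * kuratowski 𝓑₀ :=
        mul_le_mul_of_nonneg_right (pow_floor_le_rpow_sub_one hη hη1.le ((one_le_div hT).2 ht))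
          (kuratowski_nonneg _)

theorem stmt_9 {X : Type*} [MetricSpace X] [CompleteSpace X] {m : ℕ}
    (S : ℝ → X → X)
    (hcont : ∀ t, 0 ≤ t → Continuous (S t))
    (hS0 : ∀ x, S 0 x = x)
    (hSadd : ∀ s t : ℝ, 0 ≤ s → 0 ≤ t → ∀ x, S (s + t) x = S s (S t x))
    (𝓑₀ : Set X) (hBbdd : Bornology.IsBounded 𝓑₀)
    (hBinv : ∀ t : ℝ, 0 ≤ t → S t '' 𝓑₀ ⊆ 𝓑₀)
    (habs : ∀ B : Set X, Bornology.IsBounded B → ∃ tB : ℝ, 0 ≤ tB ∧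
      ∀ t : ℝ, tB ≤ t → S t '' B ⊆ 𝓑₀)
    (T : ℝ) (hT : 0 < T) (δ₀ : ℝ) (hδ₀ : 0 < δ₀)
    (η : ℝ) (hη : 0 ≤ η) (hη1 : η < 1)
    (g : (Fin m → ℝ) → ℝ) (hgpos : ∀ v, 0 ≤ g v)
    (hgmono : ∀ v w : Fin m → ℝ, (∀ i, v i ≤ w i) → g v ≤ g w)
    (hg0 : g 0 = 0) (hgcont : ContinuousAt g 0)
    (ϱ : Fin m → X → X → ℝ)
    (hϱpos : ∀ i x y, 0 ≤ ϱ i x y)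
    (hϱsymm : ∀ i x y, ϱ i x y = ϱ i y x)
    (hϱdiag : ∀ i x, ϱ i x x = 0)
    (hϱtri : ∀ i x y z, ϱ i x z ≤ ϱ i x y + ϱ i y z)
    (hϱpre : ∀ i, ∀ y : ℕ → X, (∀ n, y n ∈ 𝓑₀) →
      ∃ k : ℕ → ℕ, StrictMono k ∧
        ∀ ε : ℝ, 0 < ε → ∃ N : ℕ, ∀ p q : ℕ, N ≤ p → N ≤ q → ϱ i (y (k p)) (y (k q)) ≤ ε)
    (hquasi : ∀ y₁ ∈ 𝓑₀, ∀ y₂ ∈ 𝓑₀, (∀ i, ϱ i y₁ y₂ ≤ δ₀) →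
      dist (S T y₁) (S T y₂) ≤ η * dist y₁ y₂ + g (fun i => ϱ i y₁ y₂)) :
    ∀ t : ℝ, T ≤ t → kuratowski (S t '' 𝓑₀) ≤ η ^ (t / T - 1) * kuratowski 𝓑₀ :=
  stmt_9_general S hSadd 𝓑₀ hBinv T hT δ₀ hδ₀ η hη hη1 g hgmono hg0 hgcont ϱ hϱsymm hϱtri hϱpre
    hquasi
end

section
/- Let {S(t)} be a semigroup on a complete metric space, B a bounded set, n a natural number, T > 0, and suppose that for every sequence {y_p} ⊆ B, liminf_{p→∞} liminf_{q→∞} d(S(nT)y_p, S(nT)y_q) ≤ c for some constant c ≥ 0. Then α(S(nT)B) ≤ 2c. -/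
open Set Metric Filter

/-! If `E` is not covered by finitely many closed balls of radius `r > c`, a greedy choice gives an
`r`-separated sequence in `E`, whose iterated `liminf` of distances is then at least `r > c`.
Hence `E` is covered by finitely many sets of diameter at most `2r`, for every `r > c`. -/

section

variable {X : Type*} [MetricSpace X]

lemma kuratowski_le_of_finset_cover {A : Set X} {δ : ℝ} (hδ : 0 < δ) (𝓒 : Finset (Set X))
    (hA : A ⊆ ⋃ s ∈ 𝓒, s) (hdiam : ∀ s ∈ 𝓒, diam s < δ) : kuratowski A ≤ δ :=
  csInf_le ⟨0, fun _ h => h.1.le⟩ ⟨hδ, 𝓒, hA, hdiam⟩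

/-- An unbounded set has the junk diameter `0`, so it covers itself with a set of small diameter. -/
lemma kuratowski_le_of_not_isBounded {A : Set X} (hA : ¬Bornology.IsBounded A) {δ : ℝ}
    (hδ : 0 < δ) : kuratowski A ≤ δ :=
  kuratowski_le_of_finset_cover hδ {A} (by simp) (by simpa [diam_eq_zero_of_unbounded hA])

lemma kuratowski_le_of_subset_biUnion_closedBall {A t : Set X} (ht : t.Finite) {r δ : ℝ}
    (hr : 0 ≤ r) (hA : A ⊆ ⋃ x ∈ t, closedBall x r) (hδ : 2 * r < δ) : kuratowski A ≤ δ := by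
  classical
  refine kuratowski_le_of_finset_cover (by linarith) (ht.toFinset.image (closedBall · r)) ?_ ?_
  · simpa only [Finset.set_biUnion_finset_image, Finite.mem_toFinset] using hA
  · simp only [Finset.mem_image, forall_exists_index, and_imp]
    rintro _ x - rfl
    exact (diam_closedBall hr).trans_lt hδ

lemma exists_seq_pairwise_lt_dist_of_not_subset_biUnion_closedBall {A : Set X} {r : ℝ}
    (h : ∀ t : Set X, t.Finite → ¬A ⊆ ⋃ x ∈ t, closedBall x r) :
    ∃ x : ℕ → X, (∀ k, x k ∈ A) ∧ Pairwise fun p q => r < dist (x p) (x q) := by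
  obtain ⟨x, hx⟩ := seq_of_forall_finite_exists
    (P := fun y t => y ∈ A ∧ ∀ z ∈ t, r < dist y z) fun t ht => by
      obtain ⟨y, hyA, hy⟩ := not_subset.1 (h t ht)
      simp only [mem_iUnion₂, mem_closedBall, not_exists, not_le] at hy
      exact ⟨y, hyA, hy⟩
  refine ⟨x, fun k => (hx k).1, fun p q hpq => ?_⟩
  rcases hpq.lt_or_gt with hlt | hgt
  · rw [dist_comm]
    exact (hx q).2 _ (mem_image_of_mem _ hlt)
  · exact (hx p).2 _ (mem_image_of_mem _ hgt)

lemma le_liminf_liminf_dist_of_pairwise {x : ℕ → X} (hx : Bornology.IsBounded (range x)) {r : ℝ}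
    (hsep : Pairwise fun p q => r < dist (x p) (x q)) :
    r ≤ liminf (fun p => liminf (fun q => dist (x p) (x q)) atTop) atTop := by
  have hD : ∀ p q, dist (x p) (x q) ≤ diam (range x) := fun p q =>
    dist_le_diam_of_mem hx (mem_range_self p) (mem_range_self q)
  have hinner : ∀ p, r ≤ liminf (fun q => dist (x p) (x q)) atTop := fun p =>
    le_liminf_of_le (isCoboundedUnder_ge_of_le atTop (hD p))
      ((eventually_gt_atTop p).mono fun _ hq => (hsep hq.ne).le)
  have hinner_le : ∀ p, liminf (fun q => dist (x p) (x q)) atTop ≤ diam (range x) := fun p =>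
    liminf_le_of_frequently_le (Frequently.of_forall (hD p))
      (isBoundedUnder_of ⟨0, fun _ => dist_nonneg⟩)
  exact le_liminf_of_le (isCoboundedUnder_ge_of_le atTop hinner_le) (Eventually.of_forall hinner)

lemma exists_finite_subset_biUnion_closedBall_of_liminf_liminf_dist_le {E : Set X}
    (hE : Bornology.IsBounded E) {c r : ℝ} (hcr : c < r)
    (hlim : ∀ x : ℕ → X, (∀ p, x p ∈ E) →
      liminf (fun p => liminf (fun q => dist (x p) (x q)) atTop) atTop ≤ c) :
    ∃ t : Set X, t.Finite ∧ E ⊆ ⋃ x ∈ t, closedBall x r := by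
  by_contra! h
  obtain ⟨x, hxE, hsep⟩ := exists_seq_pairwise_lt_dist_of_not_subset_biUnion_closedBall h
  have hr := le_liminf_liminf_dist_of_pairwise (hE.subset (range_subset_iff.2 hxE)) hsep
  exact hcr.not_ge (hr.trans (hlim x hxE))

theorem kuratowski_le_two_mul_of_liminf_liminf_dist_le {E : Set X} {c : ℝ} (hc : 0 ≤ c)
    (hlim : ∀ x : ℕ → X, (∀ p, x p ∈ E) →
      liminf (fun p => liminf (fun q => dist (x p) (x q)) atTop) atTop ≤ c) :
    kuratowski E ≤ 2 * c := by
  refine le_of_forall_pos_le_add fun ε hε => ?_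
  by_cases hE : Bornology.IsBounded E
  · obtain ⟨t, ht, hcover⟩ :=
      exists_finite_subset_biUnion_closedBall_of_liminf_liminf_dist_le hE
        (by linarith : c < c + ε / 4) hlim
    exact kuratowski_le_of_subset_biUnion_closedBall ht (by positivity) hcover (by linarith)
  · exact kuratowski_le_of_not_isBounded hE (by positivity)

end

theorem stmt_12_general {X : Type*} [MetricSpace X]
    (S : ℝ → X → X)
    (B : Set X)
    (n : ℕ) (T : ℝ) (c : ℝ) (hc : 0 ≤ c)
    (hlim : ∀ y : ℕ → X, (∀ p, y p ∈ B) →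
      Filter.liminf (fun p =>
        Filter.liminf (fun q => dist (S (n * T) (y p)) (S (n * T) (y q))) atTop) atTop ≤ c) :
    kuratowski (S (n * T) '' B) ≤ 2 * c := by
  refine kuratowski_le_two_mul_of_liminf_liminf_dist_le hc fun x hx => ?_
  choose y hyB hyx using hx
  simpa only [hyx] using hlim y hyB

theorem stmt_12 {X : Type*} [MetricSpace X] [CompleteSpace X]
    (S : ℝ → X → X)
    (hcont : ∀ t, 0 ≤ t → Continuous (S t))
    (hS0 : ∀ x, S 0 x = x)
    (hSadd : ∀ s t : ℝ, 0 ≤ s → 0 ≤ t → ∀ x, S (s + t) x = S s (S t x))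
    (B : Set X) (hBbdd : Bornology.IsBounded B)
    (n : ℕ) (T : ℝ) (hT : 0 < T) (c : ℝ) (hc : 0 ≤ c)
    (hlim : ∀ y : ℕ → X, (∀ p, y p ∈ B) →
      Filter.liminf (fun p =>
        Filter.liminf (fun q => dist (S (n * T) (y p)) (S (n * T) (y q))) atTop) atTop ≤ c) :
    kuratowski (S (n * T) '' B) ≤ 2 * c :=
  stmt_12_general S B n T c hc hlim
end

section
/- For p > 0 and a Hilbert space H with norm ‖·‖, there exists a constant C_p > 0 such that for all w, v ∈ H: ⟨‖w‖^p w − ‖v‖^p v, w − v⟩ ≥ C_p ‖w − v‖^{p+2}. -/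
/-!
Writing `a = ‖w‖ ^ p` and `b = ‖v‖ ^ p`, expanding both sides gives
`⟪a • w - b • v, w - v⟫ = (a + b) / 2 * ‖w - v‖ ^ 2 + (a - b) * (‖w‖ ^ 2 - ‖v‖ ^ 2) / 2`,
whose second term is nonnegative because `t ↦ t ^ p` and `t ↦ t ^ 2` are both increasing.
The remaining factor `(a + b) / 2` dominates `‖w - v‖ ^ p / 2 ^ (p + 1)`, since
`‖w - v‖ ≤ ‖w‖ + ‖v‖ ≤ 2 * max ‖w‖ ‖v‖`.
-/

open Real

lemma rpow_sub_rpow_mul_sq_sub_sq_nonneg {x y p : ℝ} (hx : 0 ≤ x) (hy : 0 ≤ y) (hp : 0 ≤ p) :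
    0 ≤ (x ^ p - y ^ p) * (x ^ 2 - y ^ 2) := by
  rcases le_total x y with h | h
  · exact mul_nonneg_of_nonpos_of_nonpos (sub_nonpos.2 (by gcongr)) (sub_nonpos.2 (by gcongr))
  · exact mul_nonneg (sub_nonneg.2 (by gcongr)) (sub_nonneg.2 (by gcongr))

lemma add_rpow_le_two_rpow_mul_rpow_add_rpow {x y p : ℝ} (hx : 0 ≤ x) (hy : 0 ≤ y)
    (hp : 0 ≤ p) : (x + y) ^ p ≤ 2 ^ p * (x ^ p + y ^ p) :=
  calc (x + y) ^ p ≤ (2 * max x y) ^ p := by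
        gcongr
        linarith [le_max_left x y, le_max_right x y]
    _ = 2 ^ p * max (x ^ p) (y ^ p) := by
        rw [mul_rpow zero_le_two (le_max_of_le_left hx), rpow_max hx hy hp]
    _ ≤ 2 ^ p * (x ^ p + y ^ p) := by
        gcongr
        exact max_le_add_of_nonneg (rpow_nonneg hx p) (rpow_nonneg hy p)

lemma norm_sub_rpow_le {E : Type*} [SeminormedAddCommGroup E] {p : ℝ} (hp : 0 ≤ p)
    (w v : E) : ‖w - v‖ ^ p ≤ 2 ^ p * (‖w‖ ^ p + ‖v‖ ^ p) :=
  (rpow_le_rpow (norm_nonneg _) (norm_sub_le w v) hp).trans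
    (add_rpow_le_two_rpow_mul_rpow_add_rpow (norm_nonneg w) (norm_nonneg v) hp)

section InnerProductSpace

variable {H : Type*} [NormedAddCommGroup H] [InnerProductSpace ℝ H]

lemma real_inner_smul_sub_smul_sub_eq (a b : ℝ) (w v : H) :
    inner ℝ (a • w - b • v) (w - v) =
      (a + b) / 2 * ‖w - v‖ ^ 2 + (a - b) * (‖w‖ ^ 2 - ‖v‖ ^ 2) / 2 := by
  rw [norm_sub_sq_real]
  simp only [inner_sub_left, inner_sub_right, real_inner_smul_left,
    real_inner_self_eq_norm_sq, real_inner_comm v w]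
  ring

lemma add_div_two_mul_norm_sub_sq_le_real_inner {a b : ℝ} {w v : H}
    (h : 0 ≤ (a - b) * (‖w‖ ^ 2 - ‖v‖ ^ 2)) :
    (a + b) / 2 * ‖w - v‖ ^ 2 ≤ inner ℝ (a • w - b • v) (w - v) := by
  rw [real_inner_smul_sub_smul_sub_eq]
  linarith

end InnerProductSpace

theorem stmt_17 {H : Type*} [NormedAddCommGroup H] [InnerProductSpace ℝ H]
    (p : ℝ) (hp : 0 < p) :
    ∃ C : ℝ, 0 < C ∧ ∀ w v : H,
      C * ‖w - v‖ ^ (p + 2) ≤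
        (inner ℝ ((‖w‖ ^ p) • w - (‖v‖ ^ p) • v) (w - v) : ℝ) := by
  refine ⟨(2 ^ (p + 1))⁻¹, by positivity, fun w v => ?_⟩
  calc (2 ^ (p + 1))⁻¹ * ‖w - v‖ ^ (p + 2)
      = (2 ^ (p + 1))⁻¹ * ‖w - v‖ ^ p * ‖w - v‖ ^ 2 := by
        rw [rpow_add' (norm_nonneg _) (by linarith), rpow_two, mul_assoc]
    _ ≤ (2 ^ (p + 1))⁻¹ * (2 ^ p * (‖w‖ ^ p + ‖v‖ ^ p)) * ‖w - v‖ ^ 2 := by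
        gcongr
        exact norm_sub_rpow_le hp.le w v
    _ = (‖w‖ ^ p + ‖v‖ ^ p) / 2 * ‖w - v‖ ^ 2 := by
        rw [rpow_add_one two_ne_zero]
        field_simp
    _ ≤ inner ℝ (‖w‖ ^ p • w - ‖v‖ ^ p • v) (w - v) :=
        add_div_two_mul_norm_sub_sq_le_real_inner
          (rpow_sub_rpow_mul_sq_sub_sq_nonneg (norm_nonneg w) (norm_nonneg v) hp.le)
end
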